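/- arXiv:1304.7829 — 7 statements merged into one kernel-verified Lean document; each statement's English description precedes it below -/
import Mathlib

section
/- Let A, B be n×p real matrices and let κ(M, s) = min over J with |J| ≤ s and δ ≠ 0 with ‖δ_{J^c}‖₁ ≤ 3‖δ_J‖₁ of ‖Mδ‖₂ / (√n ‖δ_J‖₂). Suppose κ(B, s) ≥ κ₂ > 0 and max_{i,j} n⁻¹|a_iᵀa_j − b_iᵀb_j| ≤ κ₂²/(64 s), where a_i, b_i are the columns of A and B. Then κ(A, s) ≥ κ₂/2. -/
open Finset Matrix

/-! In the restricted cone `‖δ_{Jᶜ}‖₁ ≤ 3‖δ_J‖₁` with `|J| ≤ s`, Cauchy–Schwarz gives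
`‖δ‖₁² ≤ 16 s ‖δ_J‖₂²`. Since `‖Mδ‖₂² = ∑ᵢⱼ δᵢ δⱼ (MᵀM)ᵢⱼ`, an entrywise bound `n c` on the
difference of the Gram matrices perturbs the quadratic form by at most `‖δ‖₁² n c`, which for
`c = κ₂²/(64 s)` is at most `(κ₂/2)² n ‖δ_J‖₂²`. Hence
`‖Aδ‖₂² ≥ ‖Bδ‖₂² - (κ₂/2)² n ‖δ_J‖₂² ≥ (κ₂² - κ₂²/4) n ‖δ_J‖₂²`. -/

section QuadraticForm

variable {ι m : Type*} [Fintype ι] [Fintype m]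

theorem sum_sq_mulVec_eq_sum_gram (M : Matrix m ι ℝ) (δ : ι → ℝ) :
    ∑ r, (M *ᵥ δ) r ^ 2 = ∑ i, ∑ j, δ i * δ j * ∑ r, M r i * M r j := by
  have hrow : ∀ r, (M *ᵥ δ) r ^ 2 = ∑ i, ∑ j, δ i * δ j * (M r i * M r j) := fun r => by
    simp only [mulVec, dotProduct, sq, sum_mul_sum]
    exact sum_congr rfl fun i _ => sum_congr rfl fun j _ => by ring
  simp only [hrow, mul_sum]
  rw [sum_comm]
  exact sum_congr rfl fun i _ => sum_comm

theorem abs_sum_mul_mul_le (G : ι → ι → ℝ) (δ : ι → ℝ) (c : ℝ) (hG : ∀ i j, |G i j| ≤ c) :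
    |∑ i, ∑ j, δ i * δ j * G i j| ≤ (∑ i, |δ i|) ^ 2 * c :=
  calc |∑ i, ∑ j, δ i * δ j * G i j|
      ≤ ∑ i, ∑ j, |δ i * δ j * G i j| :=
        (abs_sum_le_sum_abs _ _).trans (sum_le_sum fun i _ => abs_sum_le_sum_abs _ _)
    _ ≤ ∑ i, ∑ j, |δ i| * |δ j| * c := by
        gcongr with i _ j _
        rw [abs_mul, abs_mul]
        exact mul_le_mul_of_nonneg_left (hG i j) (by positivity)
    _ = (∑ i, |δ i|) ^ 2 * c := by
        rw [sq, sum_mul_sum]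
        simp only [sum_mul]

theorem abs_sum_sq_mulVec_sub_le (A B : Matrix m ι ℝ) (δ : ι → ℝ) (c : ℝ)
    (hGram : ∀ i j, |(∑ r, A r i * A r j) - ∑ r, B r i * B r j| ≤ c) :
    |∑ r, (A *ᵥ δ) r ^ 2 - ∑ r, (B *ᵥ δ) r ^ 2| ≤ (∑ i, |δ i|) ^ 2 * c := by
  have hsub : ∑ r, (A *ᵥ δ) r ^ 2 - ∑ r, (B *ᵥ δ) r ^ 2 =
      ∑ i, ∑ j, δ i * δ j * ((∑ r, A r i * A r j) - ∑ r, B r i * B r j) := by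
    simp only [sum_sq_mulVec_eq_sum_gram, mul_sub, sum_sub_distrib]
  rw [hsub]
  exact abs_sum_mul_mul_le _ δ c hGram

end QuadraticForm

theorem sq_sum_abs_le_of_cone {ι : Type*} [Fintype ι] [DecidableEq ι] (J : Finset ι)
    (δ : ι → ℝ) (k : ℝ) (hcone : ∑ i ∈ Jᶜ, |δ i| ≤ k * ∑ i ∈ J, |δ i|) :
    (∑ i, |δ i|) ^ 2 ≤ (1 + k) ^ 2 * #J * ∑ i ∈ J, δ i ^ 2 := by
  have hsplit : ∑ i, |δ i| ≤ (1 + k) * ∑ i ∈ J, |δ i| := by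
    rw [← sum_add_sum_compl J]
    linarith
  have hCS : (∑ i ∈ J, |δ i|) ^ 2 ≤ #J * ∑ i ∈ J, δ i ^ 2 := by
    simpa only [sq_abs] using sq_sum_le_card_mul_sum_sq (s := J) (f := fun i => |δ i|)
  calc (∑ i, |δ i|) ^ 2 ≤ ((1 + k) * ∑ i ∈ J, |δ i|) ^ 2 :=
        pow_le_pow_left₀ (by positivity) hsplit 2
    _ = (1 + k) ^ 2 * (∑ i ∈ J, |δ i|) ^ 2 := mul_pow _ _ _
    _ ≤ (1 + k) ^ 2 * #J * ∑ i ∈ J, δ i ^ 2 := by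
        rw [mul_assoc]
        exact mul_le_mul_of_nonneg_left hCS (sq_nonneg _)

theorem mul_sqrt_mul_sqrt_le_sqrt_iff {a x y z : ℝ} (ha : 0 ≤ a) (hx : 0 ≤ x) (hz : 0 ≤ z) :
    a * √x * √y ≤ √z ↔ a ^ 2 * x * y ≤ z := by
  rw [← Real.sqrt_le_sqrt_iff hz, Real.sqrt_mul (by positivity), Real.sqrt_mul (sq_nonneg a),
    Real.sqrt_sq ha]

/-- Deterministic core of Lemma A.1: if the restricted eigenvalue of `B` is at least `κ₂ > 0`
and the columns of `A` and `B` have entrywise Gram difference at most `κ₂²/(64 s)` (scaled by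
`n⁻¹`), then the restricted eigenvalue of `A` is at least `κ₂/2`. The restricted eigenvalue
condition `κ(M, s) ≥ κ` is expressed as: for every `J` with `|J| ≤ s` and every `δ` in the
cone `‖δ_{Jᶜ}‖₁ ≤ 3‖δ_J‖₁`, one has `‖Mδ‖₂ ≥ κ √n ‖δ_J‖₂`. -/
theorem stmt2 (n p s : ℕ) (hn : 0 < n) (hs : 0 < s)
    (A B : Matrix (Fin n) (Fin p) ℝ) (κ₂ : ℝ) (hκ₂ : 0 < κ₂)
    (hRE : ∀ (J : Finset (Fin p)) (δ : Fin p → ℝ), J.card ≤ s →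
      (∑ i ∈ Jᶜ, |δ i| ≤ 3 * ∑ i ∈ J, |δ i|) →
      κ₂ * Real.sqrt n * Real.sqrt (∑ i ∈ J, (δ i) ^ 2) ≤
        Real.sqrt (∑ r, (B.mulVec δ r) ^ 2))
    (hGram : ∀ i j : Fin p,
      (1 / (n : ℝ)) * |(∑ r, A r i * A r j) - ∑ r, B r i * B r j| ≤ κ₂ ^ 2 / (64 * s)) :
    ∀ (J : Finset (Fin p)) (δ : Fin p → ℝ), J.card ≤ s →
      (∑ i ∈ Jᶜ, |δ i| ≤ 3 * ∑ i ∈ J, |δ i|) →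
      (κ₂ / 2) * Real.sqrt n * Real.sqrt (∑ i ∈ J, (δ i) ^ 2) ≤
        Real.sqrt (∑ r, (A.mulVec δ r) ^ 2) := by
  intro J δ hJ hcone
  have hn' : (0 : ℝ) < n := by exact_mod_cast hn
  have hB := (mul_sqrt_mul_sqrt_le_sqrt_iff hκ₂.le hn'.le (by positivity)).1 (hRE J δ hJ hcone)
  rw [mul_sqrt_mul_sqrt_le_sqrt_iff (by positivity) hn'.le (by positivity)]
  have hdiff := abs_sum_sq_mulVec_sub_le A B δ _ fun i j => by
    simpa only [one_div, inv_mul_le_iff₀ hn'] using hGram i j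
  have hL := sq_sum_abs_le_of_cone J δ 3 hcone
  set Q := ∑ i ∈ J, δ i ^ 2
  have hperturb : (∑ i, |δ i|) ^ 2 * (n * (κ₂ ^ 2 / (64 * s))) ≤ (κ₂ / 2) ^ 2 * n * Q :=
    calc (∑ i, |δ i|) ^ 2 * (n * (κ₂ ^ 2 / (64 * s)))
        ≤ (1 + 3) ^ 2 * #J * Q * (n * (κ₂ ^ 2 / (64 * s))) := by gcongr
      _ ≤ (1 + 3) ^ 2 * s * Q * (n * (κ₂ ^ 2 / (64 * s))) := by gcongr
      _ = (κ₂ / 2) ^ 2 * n * Q := by field_simp; ring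
  have hAB := (abs_sub_le_iff.1 hdiff).2
  have hQ : 0 ≤ κ₂ ^ 2 * n * Q := by positivity
  linarith
end

section
/- Let X̂ be an n×p matrix, y = Xβ₀ + η with X an n×p matrix, β₀ ∈ ℝᵖ with support S, and let β̂ minimize β ↦ (2n)⁻¹‖y − X̂β‖₂² + μ‖β‖₁. If ‖n⁻¹X̂ᵀη − n⁻¹X̂ᵀ(X̂ − X)β₀‖_∞ ≤ μ/2, then (2n)⁻¹‖X̂(β̂ − β₀)‖₂² + (μ/2)‖β̂ − β₀‖₁ ≤ 2μ‖β̂_S − β₀_S‖₁. -/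
/-!
Comparing the Lasso objective at `β̂` with its value at `β₀` gives the basic inequality
`(2n)⁻¹‖X̂Δ‖² ≤ n⁻¹⟨y − X̂β₀, X̂Δ⟩ + μ(‖β₀‖₁ − ‖β̂‖₁)` for `Δ = β̂ − β₀`. Since
`y − X̂β₀ = η − (X̂ − X)β₀`, the cross term is `⟨n⁻¹X̂ᵀη − n⁻¹X̂ᵀ(X̂ − X)β₀, Δ⟩`, which Hölder's
inequality and the noise condition bound by `(μ/2)‖Δ‖₁`. Finally, as `β₀` vanishes off `S`,
`‖Δ‖₁ + ‖β₀‖₁ − ‖β̂‖₁ ≤ 2‖Δ_S‖₁` by the triangle inequality on `S`.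
-/

open Finset Matrix

section

variable {m k : Type*} [Fintype m] [Fintype k]

theorem sum_sub_sq_eq (a b : m → ℝ) :
    ∑ r, (a r - b r) ^ 2 = ∑ r, a r ^ 2 - 2 * (a ⬝ᵥ b) + ∑ r, b r ^ 2 := by
  simp only [dotProduct, mul_sum, ← sum_sub_distrib, ← sum_add_distrib]
  exact sum_congr rfl fun r _ => by ring

theorem lasso_basic_inequality (A : Matrix m k ℝ) (y : m → ℝ) (c μ : ℝ) (β₀ βh : k → ℝ)
    (hmin : c * ∑ r, (y r - (A *ᵥ βh) r) ^ 2 + μ * ∑ j, |βh j| ≤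
      c * ∑ r, (y r - (A *ᵥ β₀) r) ^ 2 + μ * ∑ j, |β₀ j|) :
    c * ∑ r, (A *ᵥ (βh - β₀)) r ^ 2 ≤
      2 * c * ((y - A *ᵥ β₀) ⬝ᵥ A *ᵥ (βh - β₀)) + μ * (∑ j, |β₀ j| - ∑ j, |βh j|) := by
  have hres : ∀ r, y r - (A *ᵥ βh) r = (y - A *ᵥ β₀) r - (A *ᵥ (βh - β₀)) r := by
    intro r
    simp only [mulVec_sub, Pi.sub_apply]
    ring
  have hexp : ∑ r, (y r - (A *ᵥ βh) r) ^ 2 = ∑ r, (y - A *ᵥ β₀) r ^ 2 -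
      2 * ((y - A *ᵥ β₀) ⬝ᵥ A *ᵥ (βh - β₀)) + ∑ r, (A *ᵥ (βh - β₀)) r ^ 2 := by
    simp only [hres]
    exact sum_sub_sq_eq _ _
  rw [hexp] at hmin
  simp only [Pi.sub_apply] at hmin
  linarith

theorem dotProduct_le_mul_sum_abs {a d : k → ℝ} {c : ℝ} (ha : ∀ j, |a j| ≤ c) :
    a ⬝ᵥ d ≤ c * ∑ j, |d j| := by
  rw [dotProduct, mul_sum]
  refine sum_le_sum fun j _ => ?_
  calc a j * d j ≤ |a j| * |d j| := by rw [← abs_mul]; exact le_abs_self _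
    _ ≤ c * |d j| := mul_le_mul_of_nonneg_right (ha j) (abs_nonneg _)

theorem sum_abs_sub_add_sub_le_of_support_subset (β₀ β : k → ℝ) (S : Finset k)
    (hS : ∀ j, j ∉ S → β₀ j = 0) :
    ∑ j, |β j - β₀ j| + (∑ j, |β₀ j| - ∑ j, |β j|) ≤ 2 * ∑ j ∈ S, |β j - β₀ j| := by
  have hoff : ∀ j ∈ univ, j ∉ S → |β j - β₀ j| + (|β₀ j| - |β j|) = 0 := fun j _ hj => by
    simp [hS j hj]
  rw [← sum_sub_distrib, ← sum_add_distrib, ← sum_subset (subset_univ S) hoff, mul_sum]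
  refine sum_le_sum fun j _ => ?_
  have := abs_sub_abs_le_abs_sub (β₀ j) (β j)
  rw [abs_sub_comm] at this
  linarith

end

theorem stmt4_general (n p : ℕ)
    (X Xh : Matrix (Fin n) (Fin p) ℝ) (η : Fin n → ℝ) (β₀ βh : Fin p → ℝ)
    (μ : ℝ) (hμ : 0 < μ)
    (y : Fin n → ℝ) (hy : y = X.mulVec β₀ + η)
    (S : Finset (Fin p)) (hS : ∀ j, j ∈ S ↔ β₀ j ≠ 0)
    (hmin : ∀ β : Fin p → ℝ,
      (1 / (2 * n : ℝ)) * (∑ r, (y r - Xh.mulVec βh r) ^ 2) + μ * ∑ j, |βh j| ≤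
        (1 / (2 * n : ℝ)) * (∑ r, (y r - Xh.mulVec β r) ^ 2) + μ * ∑ j, |β j|)
    (hnoise : ∀ j : Fin p,
      |(1 / (n : ℝ)) * (Xhᵀ.mulVec η) j -
        (1 / (n : ℝ)) * (Xhᵀ.mulVec ((Xh - X).mulVec β₀)) j| ≤ μ / 2) :
    (1 / (2 * n : ℝ)) * (∑ r, (Xh.mulVec (βh - β₀) r) ^ 2) +
        (μ / 2) * ∑ j, |βh j - β₀ j| ≤ 2 * μ * ∑ j ∈ S, |βh j - β₀ j| := by
  have hbasic := lasso_basic_inequality Xh y _ μ β₀ βh (hmin β₀)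
  have hcross : 2 * (1 / (2 * n : ℝ)) * ((y - Xh *ᵥ β₀) ⬝ᵥ Xh *ᵥ (βh - β₀)) ≤
      μ / 2 * ∑ j, |(βh - β₀) j| := by
    have hresid : y - Xh *ᵥ β₀ = η - (Xh - X) *ᵥ β₀ := by
      rw [hy, sub_mulVec]
      abel
    rw [hresid, dotProduct_mulVec, ← mulVec_transpose, mulVec_sub,
      show 2 * (1 / (2 * n : ℝ)) = 1 / n by ring, ← smul_eq_mul, ← smul_dotProduct]
    refine dotProduct_le_mul_sum_abs fun j => ?_
    convert hnoise j using 2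
    simp only [Pi.smul_apply, Pi.sub_apply, smul_eq_mul]
    ring
  have hl1 := sum_abs_sub_add_sub_le_of_support_subset β₀ βh S
    fun j hj => not_not.mp (mt (hS j).mpr hj)
  simp only [Pi.sub_apply] at hbasic hcross
  linarith [mul_le_mul_of_nonneg_left hl1 hμ.le]

/-- Basic Lasso inequality (deterministic core of Lemma A.2): if `β̂` minimizes
`(2n)⁻¹‖y − X̂β‖₂² + μ‖β‖₁` with `y = Xβ₀ + η`, `S = supp(β₀)`, and the noise
condition `‖n⁻¹X̂ᵀη − n⁻¹X̂ᵀ(X̂−X)β₀‖_∞ ≤ μ/2` holds, then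
`(2n)⁻¹‖X̂(β̂−β₀)‖₂² + (μ/2)‖β̂−β₀‖₁ ≤ 2μ‖β̂_S − β₀_S‖₁`. -/
theorem stmt4 (n p : ℕ) (hn : 0 < n)
    (X Xh : Matrix (Fin n) (Fin p) ℝ) (η : Fin n → ℝ) (β₀ βh : Fin p → ℝ)
    (μ : ℝ) (hμ : 0 < μ)
    (y : Fin n → ℝ) (hy : y = X.mulVec β₀ + η)
    (S : Finset (Fin p)) (hS : ∀ j, j ∈ S ↔ β₀ j ≠ 0)
    (hmin : ∀ β : Fin p → ℝ,
      (1 / (2 * n : ℝ)) * (∑ r, (y r - Xh.mulVec βh r) ^ 2) + μ * ∑ j, |βh j| ≤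
        (1 / (2 * n : ℝ)) * (∑ r, (y r - Xh.mulVec β r) ^ 2) + μ * ∑ j, |β j|)
    (hnoise : ∀ j : Fin p,
      |(1 / (n : ℝ)) * (Xhᵀ.mulVec η) j -
        (1 / (n : ℝ)) * (Xhᵀ.mulVec ((Xh - X).mulVec β₀)) j| ≤ μ / 2) :
    (1 / (2 * n : ℝ)) * (∑ r, (Xh.mulVec (βh - β₀) r) ^ 2) +
        (μ / 2) * ∑ j, |βh j - β₀ j| ≤ 2 * μ * ∑ j ∈ S, |βh j - β₀ j| :=
  stmt4_general n p X Xh η β₀ βh μ hμ y hy S hS hmin hnoise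
end

section
/- Let Ĉ, C be p×p symmetric matrices and S ⊂ {1,...,p} with C_{SS} invertible, ‖(C_{SS})⁻¹‖_∞ ≤ φ, and ‖C_{S^cS}(C_{SS})⁻¹‖_∞ ≤ 1 − α for some 0 < α ≤ 1. If φ‖Ĉ_{SS} − C_{SS}‖_∞ ≤ α/(4−α) and φ‖Ĉ_{S^cS} − C_{S^cS}‖_∞ ≤ α/(4−α), then Ĉ_{SS} is invertible, ‖(Ĉ_{SS})⁻¹‖_∞ ≤ ((4−α)/(2(2−α)))φ, and ‖Ĉ_{S^cS}(Ĉ_{SS})⁻¹‖_∞ ≤ 1 − α/2. -/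
/-!
All norms are the ℓ∞ operator norm (maximal absolute row sum), in which the row-sum hypotheses
are norm bounds. Put `Δ = Ĉ_SS − C_SS` and `ρ = α/(4−α)`, so `‖C_SS⁻¹ Δ‖ ≤ φ‖Δ‖ ≤ ρ < 1`. A kernel
vector of `Ĉ_SS` would be a fixed point of `−C_SS⁻¹ Δ`, which is impossible, so `Ĉ_SS` is
invertible, and the resolvent identity `Ĉ_SS⁻¹ = C_SS⁻¹ − C_SS⁻¹ Δ Ĉ_SS⁻¹` gives
`‖Ĉ_SS⁻¹‖ ≤ φ/(1−ρ) = (4−α)φ/(2(2−α))`. Splitting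
`Ĉ_{SᶜS} Ĉ_SS⁻¹ − C_{SᶜS} C_SS⁻¹ = (Ĉ_{SᶜS} − C_{SᶜS}) Ĉ_SS⁻¹ − C_{SᶜS} C_SS⁻¹ Δ Ĉ_SS⁻¹`
bounds the irrepresentability constant by `(1−α) + (2−α) ρ/(1−ρ) = 1 − α/2`.
-/

open Matrix

attribute [local instance] Matrix.linftyOpNormedAddCommGroup Matrix.linftyOpNormedRing

namespace Matrix

variable {R E 𝕜 m n : Type*} [Fintype n]

section Algebra

variable [CommRing R] [DecidableEq n]

theorem mul_inv_sub_mul_inv (F F' : Matrix m n R) {A B : Matrix n n R} (hA : IsUnit A.det)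
    (hB : IsUnit B.det) :
    F' * B⁻¹ - F * A⁻¹ = (F' - F) * B⁻¹ - F * A⁻¹ * (B - A) * B⁻¹ := by
  have hinv : A⁻¹ - B⁻¹ = A⁻¹ * (B - A) * B⁻¹ :=
    inv_sub_inv (by simp only [isUnit_iff_isUnit_det, hA, hB])
  rw [Matrix.mul_assoc F, Matrix.mul_assoc F, ← hinv, Matrix.mul_sub, Matrix.sub_mul]
  abel

end Algebra

variable [Fintype m]

section RowSums

variable [NormedAddCommGroup E]

theorem linfty_opNorm_le_iff {A : Matrix m n E} {c : ℝ} (hc : 0 ≤ c) :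
    ‖A‖ ≤ c ↔ ∀ i, ∑ j, ‖A i j‖ ≤ c := by
  lift c to NNReal using hc
  simp only [← coe_nnnorm, NNReal.coe_le_coe, linfty_opNNNorm_def, Finset.sup_le_iff,
    Finset.mem_univ, true_imp_iff, ← NNReal.coe_sum]

theorem sum_norm_le_linfty_opNorm (A : Matrix m n E) (i : m) : ∑ j, ‖A i j‖ ≤ ‖A‖ :=
  (linfty_opNorm_le_iff (norm_nonneg A)).1 le_rfl i

theorem mul_linfty_opNorm_le_iff {A : Matrix m n E} {r c : ℝ} (hr : 0 ≤ r) (hc : 0 ≤ c) :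
    r * ‖A‖ ≤ c ↔ ∀ i, r * ∑ j, ‖A i j‖ ≤ c := by
  rcases hr.eq_or_lt with rfl | hr
  · simp [hc]
  · simp only [← le_div_iff₀' hr]
    exact linfty_opNorm_le_iff (div_nonneg hc hr.le)

end RowSums

section Perturbation

variable [NormedField 𝕜] [DecidableEq n]

theorem isUnit_det_of_linfty_opNorm_inv_mul_sub_lt_one {A B : Matrix n n 𝕜} (hA : IsUnit A.det)
    (h : ‖A⁻¹ * (B - A)‖ < 1) : IsUnit B.det := by
  refine isUnit_iff_ne_zero.2 fun hB ↦ ?_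
  obtain ⟨v, hv, hBv⟩ := exists_mulVec_eq_zero_iff.2 hB
  have hfix : (A⁻¹ * (B - A)) *ᵥ v = -v := by
    rw [Matrix.mul_sub, sub_mulVec, ← mulVec_mulVec, hBv, mulVec_zero, nonsing_inv_mul _ hA,
      one_mulVec, zero_sub]
  have hle : ‖v‖ ≤ ‖A⁻¹ * (B - A)‖ * ‖v‖ := by
    simpa only [hfix, norm_neg] using linfty_opNorm_mulVec (A⁻¹ * (B - A)) v
  exact (mul_lt_of_lt_one_left (norm_pos_iff.2 hv) h).not_ge hle

theorem linfty_opNorm_inv_mul_sub_le {A B : Matrix n n 𝕜} {φ ρ : ℝ} (hφ : ‖A⁻¹‖ ≤ φ)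
    (hρ : φ * ‖B - A‖ ≤ ρ) : ‖A⁻¹ * (B - A)‖ ≤ ρ :=
  (linfty_opNorm_mul _ _).trans ((mul_le_mul_of_nonneg_right hφ (norm_nonneg _)).trans hρ)

theorem isUnit_det_of_perturbation {A B : Matrix n n 𝕜} (hA : IsUnit A.det) {φ ρ : ℝ}
    (hφ : ‖A⁻¹‖ ≤ φ) (hρ : φ * ‖B - A‖ ≤ ρ) (hρ1 : ρ < 1) : IsUnit B.det :=
  isUnit_det_of_linfty_opNorm_inv_mul_sub_lt_one hA
    ((linfty_opNorm_inv_mul_sub_le hφ hρ).trans_lt hρ1)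

theorem linfty_opNorm_inv_le_of_perturbation {A B : Matrix n n 𝕜} (hA : IsUnit A.det)
    {φ ρ : ℝ} (hφ : ‖A⁻¹‖ ≤ φ) (hρ : φ * ‖B - A‖ ≤ ρ) (hρ1 : ρ < 1) :
    ‖B⁻¹‖ ≤ φ / (1 - ρ) := by
  have hB := isUnit_det_of_perturbation hA hφ hρ hρ1
  have hinv : B⁻¹ = A⁻¹ - A⁻¹ * (B - A) * B⁻¹ := by
    rw [← inv_sub_inv (by simp only [isUnit_iff_isUnit_det, hA, hB]), sub_sub_cancel]
  have hle : ‖B⁻¹‖ ≤ φ + ρ * ‖B⁻¹‖ :=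
    calc ‖B⁻¹‖ ≤ ‖A⁻¹‖ + ‖A⁻¹ * (B - A)‖ * ‖B⁻¹‖ := by
          nth_rw 1 [hinv]
          exact (norm_sub_le _ _).trans (add_le_add le_rfl (norm_mul_le _ _))
      _ ≤ φ + ρ * ‖B⁻¹‖ := by gcongr; exact linfty_opNorm_inv_mul_sub_le hφ hρ
  rw [le_div_iff₀ (sub_pos.2 hρ1)]
  linarith

theorem linfty_opNorm_mul_inv_le (F F' : Matrix m n 𝕜) {A B : Matrix n n 𝕜}
    (hA : IsUnit A.det) (hB : IsUnit B.det) :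
    ‖F' * B⁻¹‖ ≤ ‖F * A⁻¹‖ + ‖F' - F‖ * ‖B⁻¹‖ + ‖F * A⁻¹‖ * (‖B - A‖ * ‖B⁻¹‖) :=
  calc ‖F' * B⁻¹‖ = ‖F * A⁻¹ + (F' - F) * B⁻¹ - F * A⁻¹ * ((B - A) * B⁻¹)‖ := by
        rw [← Matrix.mul_assoc, add_sub_assoc, ← mul_inv_sub_mul_inv F F' hA hB, add_sub_cancel]
    _ ≤ ‖F * A⁻¹‖ + ‖(F' - F) * B⁻¹‖ + ‖F * A⁻¹ * ((B - A) * B⁻¹)‖ :=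
        norm_sub_le_of_le (norm_add_le _ _) le_rfl
    _ ≤ ‖F * A⁻¹‖ + ‖F' - F‖ * ‖B⁻¹‖ + ‖F * A⁻¹‖ * (‖B - A‖ * ‖B⁻¹‖) := by
        gcongr
        · exact linfty_opNorm_mul _ _
        · exact (linfty_opNorm_mul _ _).trans
            (mul_le_mul_of_nonneg_left (linfty_opNorm_mul _ _) (norm_nonneg _))

theorem linfty_opNorm_mul_inv_le_of_perturbation (F F' : Matrix m n 𝕜) {A B : Matrix n n 𝕜}
    (hA : IsUnit A.det) {φ ρ : ℝ} (hφ : ‖A⁻¹‖ ≤ φ) (hB : φ * ‖B - A‖ ≤ ρ)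
    (hF : φ * ‖F' - F‖ ≤ ρ) (hρ1 : ρ < 1) :
    ‖F' * B⁻¹‖ ≤ ‖F * A⁻¹‖ + (1 + ‖F * A⁻¹‖) * (ρ / (1 - ρ)) := by
  have hBinv := linfty_opNorm_inv_le_of_perturbation hA hφ hB hρ1
  have hscaled {D : ℝ} (hD : 0 ≤ D) (h : φ * D ≤ ρ) : D * ‖B⁻¹‖ ≤ ρ / (1 - ρ) :=
    calc D * ‖B⁻¹‖ ≤ D * (φ / (1 - ρ)) := mul_le_mul_of_nonneg_left hBinv hD
      _ = φ * D / (1 - ρ) := by ring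
      _ ≤ ρ / (1 - ρ) := div_le_div_of_nonneg_right h (sub_pos.2 hρ1).le
  have hcross := mul_le_mul_of_nonneg_left (hscaled (norm_nonneg _) hB) (norm_nonneg (F * A⁻¹))
  linarith [linfty_opNorm_mul_inv_le F F' hA (isUnit_det_of_perturbation hA hφ hB hρ1),
    hscaled (norm_nonneg _) hF]

end Perturbation

end Matrix

theorem stmt8_general (p : ℕ)
    (S : Finset (Fin p)) (φ α : ℝ) (hφ : 0 ≤ φ) (hα0 : 0 < α) (hα1 : α ≤ 1)
    (CSS : Matrix {i // i ∈ S} {i // i ∈ S} ℝ)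
    (ChSS : Matrix {i // i ∈ S} {i // i ∈ S} ℝ)
    (CScS : Matrix {i // i ∉ S} {i // i ∈ S} ℝ)
    (ChScS : Matrix {i // i ∉ S} {i // i ∈ S} ℝ)
    (hinv : IsUnit CSS.det)
    (hCinv : ∀ i, ∑ j, |CSS⁻¹ i j| ≤ φ)
    (hirr : ∀ i, ∑ j, |(CScS * CSS⁻¹) i j| ≤ 1 - α)
    (hpert1 : ∀ i, φ * (∑ j, |ChSS i j - CSS i j|) ≤ α / (4 - α))
    (hpert2 : ∀ i, φ * (∑ j, |ChScS i j - CScS i j|) ≤ α / (4 - α)) :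
    IsUnit ChSS.det ∧
      (∀ i, ∑ j, |ChSS⁻¹ i j| ≤ ((4 - α) / (2 * (2 - α))) * φ) ∧
      (∀ i, ∑ j, |(ChScS * ChSS⁻¹) i j| ≤ 1 - α / 2) := by
  have h2α : 2 - α ≠ 0 := by linarith
  have h4α : 4 - α ≠ 0 := by linarith
  set ρ := α / (4 - α)
  have hρ0 : 0 ≤ ρ := div_nonneg hα0.le (by linarith)
  have hρ1 : ρ < 1 := (div_lt_one (by linarith)).2 (by linarith)
  have h1ρ : 1 - ρ = 2 * (2 - α) / (4 - α) := by
    simp only [ρ]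
    field_simp
    ring
  simp only [← Real.norm_eq_abs, ← Matrix.sub_apply] at hCinv hirr hpert1 hpert2 ⊢
  have hA : ‖CSS⁻¹‖ ≤ φ := (linfty_opNorm_le_iff hφ).2 hCinv
  have hF : ‖CScS * CSS⁻¹‖ ≤ 1 - α := (linfty_opNorm_le_iff (by linarith)).2 hirr
  have hΔ₁ : φ * ‖ChSS - CSS‖ ≤ ρ := (mul_linfty_opNorm_le_iff hφ hρ0).2 hpert1
  have hΔ₂ : φ * ‖ChScS - CScS‖ ≤ ρ := (mul_linfty_opNorm_le_iff hφ hρ0).2 hpert2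
  refine ⟨isUnit_det_of_perturbation hinv hA hΔ₁ hρ1, fun i ↦ ?_, fun i ↦ ?_⟩
  · refine (sum_norm_le_linfty_opNorm _ i).trans
      ((linfty_opNorm_inv_le_of_perturbation hinv hA hΔ₁ hρ1).trans_eq ?_)
    rw [h1ρ]
    field_simp
  · refine (sum_norm_le_linfty_opNorm _ i).trans
      ((linfty_opNorm_mul_inv_le_of_perturbation CScS ChScS hinv hA hΔ₁ hΔ₂ hρ1).trans ?_)
    have hgain : (2 - α) * (ρ / (1 - ρ)) = α / 2 := by
      rw [h1ρ]
      simp only [ρ]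
      field_simp
    have := mul_le_mul_of_nonneg_right (add_le_add_left hF 1) (div_nonneg hρ0 (sub_pos.2 hρ1).le)
    linarith

/-- Lemma A.3: stability of the irrepresentability condition under Gram perturbation.
If `‖(C_SS)⁻¹‖_∞ ≤ φ`, `‖C_{SᶜS}(C_SS)⁻¹‖_∞ ≤ 1 − α`, and the submatrix perturbations
satisfy `φ‖Ĉ_SS − C_SS‖_∞ ≤ α/(4−α)` and `φ‖Ĉ_{SᶜS} − C_{SᶜS}‖_∞ ≤ α/(4−α)`, then
`Ĉ_SS` is invertible, `‖(Ĉ_SS)⁻¹‖_∞ ≤ ((4−α)/(2(2−α)))φ`, and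
`‖Ĉ_{SᶜS}(Ĉ_SS)⁻¹‖_∞ ≤ 1 − α/2`. -/
theorem stmt8 (p : ℕ) (Ch C : Matrix (Fin p) (Fin p) ℝ)
    (hChsym : Ch.IsSymm) (hCsym : C.IsSymm)
    (S : Finset (Fin p)) (φ α : ℝ) (hφ : 0 ≤ φ) (hα0 : 0 < α) (hα1 : α ≤ 1)
    (CSS : Matrix {i // i ∈ S} {i // i ∈ S} ℝ)
    (hCSS : ∀ i j, CSS i j = C i.1 j.1)
    (ChSS : Matrix {i // i ∈ S} {i // i ∈ S} ℝ)
    (hChSS : ∀ i j, ChSS i j = Ch i.1 j.1)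
    (CScS : Matrix {i // i ∉ S} {i // i ∈ S} ℝ)
    (hCScS : ∀ i j, CScS i j = C i.1 j.1)
    (ChScS : Matrix {i // i ∉ S} {i // i ∈ S} ℝ)
    (hChScS : ∀ i j, ChScS i j = Ch i.1 j.1)
    (hinv : IsUnit CSS.det)
    (hCinv : ∀ i, ∑ j, |CSS⁻¹ i j| ≤ φ)
    (hirr : ∀ i, ∑ j, |(CScS * CSS⁻¹) i j| ≤ 1 - α)
    (hpert1 : ∀ i, φ * (∑ j, |ChSS i j - CSS i j|) ≤ α / (4 - α))
    (hpert2 : ∀ i, φ * (∑ j, |ChScS i j - CScS i j|) ≤ α / (4 - α)) :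
    IsUnit ChSS.det ∧
      (∀ i, ∑ j, |ChSS⁻¹ i j| ≤ ((4 - α) / (2 * (2 - α))) * φ) ∧
      (∀ i, ∑ j, |(ChScS * ChSS⁻¹) i j| ≤ 1 - α / 2) :=
  stmt8_general p S φ α hφ hα0 hα1 CSS ChSS CScS ChScS hinv hCinv hirr hpert1 hpert2
end

section
/- Suppose Ĉ_{SS} = n⁻¹X̂_SᵀX̂_S is invertible with ‖(Ĉ_{SS})⁻¹‖_∞ ≤ ((4−α)/(2(2−α)))φ, the noise condition ‖n⁻¹X̂ᵀη − n⁻¹X̂ᵀ(X̂−X)β₀‖_∞ ≤ (α/(4−α))μ holds, and β̂_S is defined by β̂_S − β₀_S = (Ĉ_{SS})⁻¹{n⁻¹X̂_Sᵀη − n⁻¹X̂_Sᵀ(X̂_S − X_S)β₀_S − μ sgn(β₀_S)}. Then ‖β̂_S − β₀_S‖_∞ ≤ (2/(2−α))φμ; consequently, if min_{j∈S}|β₀_j| > (2/(2−α))φμ, then sgn(β̂_S) = sgn(β₀_S). -/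
open Finset Matrix

namespace Real

lemma abs_sign_le_one (r : ℝ) : |sign r| ≤ 1 := by
  rcases sign_apply_eq r with h | h | h <;> simp [h]

lemma abs_sub_mul_sign_le {μ : ℝ} (hμ : 0 ≤ μ) (g b : ℝ) : |g - μ * sign b| ≤ |g| + μ :=
  calc |g - μ * sign b| ≤ |g| + |μ * sign b| := abs_sub _ _
    _ ≤ |g| + μ := by
      rw [abs_mul, abs_of_nonneg hμ]
      exact add_le_add_right (mul_le_of_le_one_right hμ (abs_sign_le_one b)) _

lemma sign_eq_sign_of_abs_sub_le {x y d : ℝ} (hxy : |x - y| ≤ d) (hd : d < |y|) :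
    sign x = sign y := by
  obtain ⟨hlow, hupp⟩ := abs_le.mp hxy
  rcases lt_trichotomy y 0 with hy | hy | hy
  · rw [abs_of_neg hy] at hd
    rw [sign_of_neg hy, sign_of_neg (by linarith)]
  · rw [hy, abs_zero] at hd
    linarith
  · rw [abs_of_pos hy] at hd
    rw [sign_of_pos hy, sign_of_pos (by linarith)]

end Real

lemma abs_sum_mul_le {ι : Type*} [Fintype ι] {a v : ι → ℝ} {A B : ℝ}
    (ha : ∑ j, |a j| ≤ A) (hv : ∀ j, |v j| ≤ B) (hB : 0 ≤ B) : |∑ j, a j * v j| ≤ A * B :=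
  calc |∑ j, a j * v j| ≤ ∑ j, |a j| * B := by
        refine (abs_sum_le_sum_abs _ _).trans (sum_le_sum fun j _ => ?_)
        rw [abs_mul]
        exact mul_le_mul_of_nonneg_left (hv j) (abs_nonneg _)
    _ = (∑ j, |a j|) * B := (sum_mul ..).symm
    _ ≤ A * B := mul_le_mul_of_nonneg_right ha hB

namespace Matrix

variable {m n R : Type*} [NonUnitalNonAssocSemiring R]

lemma transpose_mulVec_apply [Fintype m] (A : Matrix m n R) (v : m → R) (j : n) :
    (Aᵀ *ᵥ v) j = ∑ r, A r j * v r :=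
  rfl

lemma mulVec_apply_eq_sum_of_support_subset [Fintype n] (A : Matrix m n R) {v : n → R}
    (S : Finset n) (hv : ∀ k ∉ S, v k = 0) (r : m) :
    (A *ᵥ v) r = ∑ k ∈ S, A r k * v k :=
  (sum_subset (subset_univ S) fun k _ hk => by rw [hv k hk, mul_zero]).symm

end Matrix

theorem stmt9_general (n p : ℕ)
    (X Xh : Matrix (Fin n) (Fin p) ℝ) (η : Fin n → ℝ) (β₀ : Fin p → ℝ)
    (μ φ α : ℝ) (hμ : 0 < μ) (hα1 : α ≤ 1)
    (S : Finset (Fin p)) (hS : ∀ j, j ∈ S ↔ β₀ j ≠ 0)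
    (ChSSinv : Matrix {i // i ∈ S} {i // i ∈ S} ℝ)
    (hCinv : ∀ i, ∑ j, |ChSSinv i j| ≤ ((4 - α) / (2 * (2 - α))) * φ)
    (hnoise : ∀ j : Fin p,
      |(1 / (n : ℝ)) * (Xhᵀ.mulVec η) j -
        (1 / (n : ℝ)) * (Xhᵀ.mulVec ((Xh - X).mulVec β₀)) j| ≤ (α / (4 - α)) * μ)
    (βhS : {i // i ∈ S} → ℝ)
    (hβhS : ∀ i : {i // i ∈ S}, βhS i - β₀ i.1 =
      ∑ j : {i // i ∈ S}, ChSSinv i j *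
        ((1 / (n : ℝ)) * (∑ r, Xh r j.1 * η r) -
          (1 / (n : ℝ)) * (∑ r, Xh r j.1 * ∑ k ∈ S, (Xh r k - X r k) * β₀ k) -
          μ * Real.sign (β₀ j.1))) :
    (∀ i : {i // i ∈ S}, |βhS i - β₀ i.1| ≤ (2 / (2 - α)) * φ * μ) ∧
      ((∀ j ∈ S, (2 / (2 - α)) * φ * μ < |β₀ j|) →
        ∀ i : {i // i ∈ S}, Real.sign (βhS i) = Real.sign (β₀ i.1)) := by
  have h4α : (4 : ℝ) - α ≠ 0 := by linarith
  have hsupp : ∀ k ∉ S, β₀ k = 0 := fun k hk => not_not.mp (mt (hS k).mpr hk)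
  have hbracket : ∀ j : {i // i ∈ S},
      |(1 / (n : ℝ)) * (∑ r, Xh r j.1 * η r) -
        (1 / (n : ℝ)) * (∑ r, Xh r j.1 * ∑ k ∈ S, (Xh r k - X r k) * β₀ k) -
        μ * Real.sign (β₀ j.1)| ≤ (4 / (4 - α)) * μ := fun j => by
    have hnoise_j := hnoise j.1
    simp only [transpose_mulVec_apply, mulVec_apply_eq_sum_of_support_subset _ S hsupp,
      Matrix.sub_apply] at hnoise_j
    calc _ ≤ _ := Real.abs_sub_mul_sign_le hμ.le _ _
      _ ≤ (α / (4 - α)) * μ + μ := by gcongr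
      _ = (4 / (4 - α)) * μ := by field_simp; ring
  have hdev : ∀ i : {i // i ∈ S}, |βhS i - β₀ i.1| ≤ (2 / (2 - α)) * φ * μ := fun i => by
    rw [hβhS i]
    calc _ ≤ ((4 - α) / (2 * (2 - α)) * φ) * ((4 / (4 - α)) * μ) :=
          abs_sum_mul_le (hCinv i) hbracket
            (mul_nonneg (div_nonneg zero_le_four (by linarith)) hμ.le)
      _ = (2 / (2 - α)) * φ * μ := by field_simp; ring
  exact ⟨hdev, fun hmin i => Real.sign_eq_sign_of_abs_sub_le (hdev i) (hmin i.1 i.2)⟩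

/-- Sign-consistency step in the proof of Theorem 3: if `Ĉ_SS = n⁻¹X̂_SᵀX̂_S` is invertible
with `‖(Ĉ_SS)⁻¹‖_∞ ≤ ((4−α)/(2(2−α)))φ`, the noise condition
`‖n⁻¹X̂ᵀη − n⁻¹X̂ᵀ(X̂−X)β₀‖_∞ ≤ (α/(4−α))μ` holds, and `β̂_S` is given by the closed-form
expression, then `‖β̂_S − β₀_S‖_∞ ≤ (2/(2−α))φμ`; if moreover `min_{j∈S}|β₀ⱼ| > (2/(2−α))φμ`
then `sgn(β̂_S) = sgn(β₀_S)`. -/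
theorem stmt9 (n p : ℕ) (hn : 0 < n)
    (X Xh : Matrix (Fin n) (Fin p) ℝ) (η : Fin n → ℝ) (β₀ : Fin p → ℝ)
    (μ φ α : ℝ) (hμ : 0 < μ) (hφ : 0 ≤ φ) (hα0 : 0 < α) (hα1 : α ≤ 1)
    (S : Finset (Fin p)) (hS : ∀ j, j ∈ S ↔ β₀ j ≠ 0)
    (ChSS : Matrix {i // i ∈ S} {i // i ∈ S} ℝ)
    (hChSS : ∀ i j, ChSS i j = (1 / (n : ℝ)) * ∑ r, Xh r i.1 * Xh r j.1)
    (ChSSinv : Matrix {i // i ∈ S} {i // i ∈ S} ℝ)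
    (hinv₁ : ChSSinv * ChSS = 1) (hinv₂ : ChSS * ChSSinv = 1)
    (hCinv : ∀ i, ∑ j, |ChSSinv i j| ≤ ((4 - α) / (2 * (2 - α))) * φ)
    (hnoise : ∀ j : Fin p,
      |(1 / (n : ℝ)) * (Xhᵀ.mulVec η) j -
        (1 / (n : ℝ)) * (Xhᵀ.mulVec ((Xh - X).mulVec β₀)) j| ≤ (α / (4 - α)) * μ)
    (βhS : {i // i ∈ S} → ℝ)
    (hβhS : ∀ i : {i // i ∈ S}, βhS i - β₀ i.1 =
      ∑ j : {i // i ∈ S}, ChSSinv i j *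
        ((1 / (n : ℝ)) * (∑ r, Xh r j.1 * η r) -
          (1 / (n : ℝ)) * (∑ r, Xh r j.1 * ∑ k ∈ S, (Xh r k - X r k) * β₀ k) -
          μ * Real.sign (β₀ j.1))) :
    (∀ i : {i // i ∈ S}, |βhS i - β₀ i.1| ≤ (2 / (2 - α)) * φ * μ) ∧
      ((∀ j ∈ S, (2 / (2 - α)) * φ * μ < |β₀ j|) →
        ∀ i : {i // i ∈ S}, Real.sign (βhS i) = Real.sign (β₀ i.1)) :=
  stmt9_general n p X Xh η β₀ μ φ α hμ hα1 S hS ChSSinv hCinv hnoise βhS hβhS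
end

section
/- In the setting of the previous statement, assume additionally ‖Ĉ_{S^cS}(Ĉ_{SS})⁻¹‖_∞ ≤ 1 − α/2 where Ĉ = n⁻¹X̂ᵀX̂. Then the vector β̂ with β̂_{S^c} = 0 and β̂_S as defined above satisfies ‖n⁻¹X̂_{S^c}ᵀ(y − X̂β̂)‖_∞ ≤ μ, i.e., the Lasso KKT dual-feasibility condition on S^c holds. -/
/-!
Off `S` the residual correlation is `w_j - (Ĉ_{SᶜS} Ĉ_SS⁻¹ e)_j`, where
`w = n⁻¹X̂ᵀη - n⁻¹X̂ᵀ(X̂ - X)β₀` and `e = w_S - μ sgn(β₀_S)`: the residual splits as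
`η - (X̂ - X)β₀ - X̂(β̂ - β₀)`, and `β̂ - β₀ = Ĉ_SS⁻¹ e` lives on `S`. The noise condition bounds
`|w_j|` by `a = αμ/(4 - α)` and `|e_k|` by `a + μ`, irrepresentability bounds the second term by
`(1 - α/2)(a + μ)`, and `a` is chosen so that `a + (1 - α/2)(a + μ) = μ`.
-/

open Finset Matrix

theorem Real.abs_sign_le_one_s10 (r : ℝ) : |Real.sign r| ≤ 1 := by
  rcases Real.sign_apply_eq r with h | h | h <;> simp [h]

namespace Matrix

variable {m m' ι R : Type*} [Fintype ι]

theorem dotProduct_eq_sum_of_support [NonUnitalNonAssocSemiring R] (u v : ι → R)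
    {S : Finset ι} (hv : ∀ k ∉ S, v k = 0) : u ⬝ᵥ v = ∑ k ∈ S, u k * v k :=
  (Finset.sum_subset (subset_univ S) fun k _ hk => by rw [hv k hk, mul_zero]).symm

theorem mulVec_apply_eq_submatrix_mulVec_of_support [NonUnitalNonAssocSemiring R]
    (M : Matrix m ι R) (f : m' → m) {S : Finset ι} {v : ι → R} (hv : ∀ k ∉ S, v k = 0)
    (i : m') : (M *ᵥ v) (f i) = (M.submatrix f (↑) *ᵥ fun k : S => v k) i :=
  (dotProduct_eq_sum_of_support _ _ hv).trans (Finset.sum_coe_sort S _).symm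

theorem abs_dotProduct_le_sum_abs_mul (u v : ι → ℝ) {B : ℝ} (hv : ∀ i, |v i| ≤ B) :
    |u ⬝ᵥ v| ≤ (∑ i, |u i|) * B := by
  calc |u ⬝ᵥ v| ≤ ∑ i, |u i| * |v i| := by
        simpa only [dotProduct, abs_mul] using Finset.abs_sum_le_sum_abs (fun i => u i * v i) univ
    _ ≤ ∑ i, |u i| * B := by gcongr with i; exact hv i
    _ = (∑ i, |u i|) * B := by rw [Finset.sum_mul]

theorem residual_eq_of_eq_mulVec_add [NonUnitalNonAssocRing R] (X Xh : Matrix m ι R)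
    (β₀ βh : ι → R) (η y : m → R) (hy : y = X *ᵥ β₀ + η) :
    y - Xh *ᵥ βh = η - (Xh - X) *ᵥ β₀ - Xh *ᵥ (βh - β₀) := by
  subst hy
  simp only [sub_mulVec, mulVec_sub]
  abel

theorem smul_transpose_mulVec_residual_apply [Fintype m] [CommRing R] (c : R)
    (X Xh : Matrix m ι R) {β₀ βh : ι → R} {η y : m → R} (hy : y = X *ᵥ β₀ + η)
    {S : Finset ι} (hsupp : ∀ k ∉ S, βh k = β₀ k) {f : m' → ι} {C : Matrix m' S R}
    (hC : ∀ i k, C i k = c * ∑ r, Xh r (f i) * Xh r k) (i : m') :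
    c * (Xhᵀ *ᵥ (y - Xh *ᵥ βh)) (f i) =
      c * (Xhᵀ *ᵥ η) (f i) - c * (Xhᵀ *ᵥ ((Xh - X) *ᵥ β₀)) (f i) -
        (C *ᵥ fun k : S => βh k - β₀ k) i := by
  have hG : C = (c • (Xhᵀ * Xh)).submatrix f (↑) := by
    ext i k; simp [hC, mul_apply]
  have hdiff : ∀ k ∉ S, (βh - β₀) k = 0 := fun k hk => sub_eq_zero.2 (hsupp k hk)
  have hcross : (C *ᵥ fun k : S => βh k - β₀ k) i = ((c • (Xhᵀ * Xh)) *ᵥ (βh - β₀)) (f i) := by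
    rw [hG]; exact (mulVec_apply_eq_submatrix_mulVec_of_support _ f hdiff i).symm
  rw [hcross, residual_eq_of_eq_mulVec_add X Xh β₀ βh η y hy]
  simp only [mulVec_sub, smul_mulVec, mulVec_mulVec, Pi.sub_apply, Pi.smul_apply, smul_eq_mul]
  ring

end Matrix

theorem abs_sub_dotProduct_le_of_irrepresentable {ι : Type*} [Fintype ι] {w μ α : ℝ}
    {u e : ι → ℝ} (hμ : 0 ≤ μ) (hα : α ≤ 1) (hw : |w| ≤ α / (4 - α) * μ)
    (hu : ∑ i, |u i| ≤ 1 - α / 2) (he : ∀ i, |e i| ≤ α / (4 - α) * μ + μ) :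
    |w - u ⬝ᵥ e| ≤ μ := by
  have hbound_nonneg : 0 ≤ α / (4 - α) * μ + μ := by linarith [abs_nonneg w]
  calc |w - u ⬝ᵥ e|
      ≤ α / (4 - α) * μ + (1 - α / 2) * (α / (4 - α) * μ + μ) :=
        (abs_sub _ _).trans <| add_le_add hw <| (abs_dotProduct_le_sum_abs_mul u e he).trans <|
          mul_le_mul_of_nonneg_right hu hbound_nonneg
    _ = μ := by
        have : 4 - α ≠ 0 := by linarith
        field_simp
        ring

theorem stmt10_general (n p : ℕ)
    (X Xh : Matrix (Fin n) (Fin p) ℝ) (η : Fin n → ℝ) (β₀ : Fin p → ℝ)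
    (μ α : ℝ) (hμ : 0 < μ) (hα1 : α ≤ 1)
    (S : Finset (Fin p)) (hS : ∀ j, j ∈ S ↔ β₀ j ≠ 0)
    (ChSSinv : Matrix {i // i ∈ S} {i // i ∈ S} ℝ)
    (hnoise : ∀ j : Fin p,
      |(1 / (n : ℝ)) * (Xhᵀ.mulVec η) j -
        (1 / (n : ℝ)) * (Xhᵀ.mulVec ((Xh - X).mulVec β₀)) j| ≤ (α / (4 - α)) * μ)
    (βhS : {i // i ∈ S} → ℝ)
    (hβhS : ∀ i : {i // i ∈ S}, βhS i - β₀ i.1 =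
      ∑ j : {i // i ∈ S}, ChSSinv i j *
        ((1 / (n : ℝ)) * (∑ r, Xh r j.1 * η r) -
          (1 / (n : ℝ)) * (∑ r, Xh r j.1 * ∑ k ∈ S, (Xh r k - X r k) * β₀ k) -
          μ * Real.sign (β₀ j.1)))
    (ChScS : Matrix {i // i ∉ S} {i // i ∈ S} ℝ)
    (hChScS : ∀ (i : {i // i ∉ S}) (j : {i // i ∈ S}),
      ChScS i j = (1 / (n : ℝ)) * ∑ r, Xh r i.1 * Xh r j.1)
    (hirr : ∀ i, ∑ j, |(ChScS * ChSSinv) i j| ≤ 1 - α / 2)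
    (y : Fin n → ℝ) (hy : y = X.mulVec β₀ + η)
    (βh : Fin p → ℝ) (hβh0 : ∀ j ∉ S, βh j = 0)
    (hβhS' : ∀ i : {i // i ∈ S}, βh i.1 = βhS i) :
    ∀ j ∉ S, |(1 / (n : ℝ)) * (Xhᵀ.mulVec (y - Xh.mulVec βh)) j| ≤ μ := by
  intro j hj
  have hβ₀ : ∀ k ∉ S, β₀ k = 0 := fun k hk => not_not.mp (mt (hS k).2 hk)
  set w : Fin p → ℝ := fun k =>
    (1 / (n : ℝ)) * (Xhᵀ *ᵥ η) k - (1 / (n : ℝ)) * (Xhᵀ *ᵥ ((Xh - X) *ᵥ β₀)) k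
  set e : S → ℝ := fun k => w k - μ * Real.sign (β₀ k)
  have he : ∀ k, |e k| ≤ α / (4 - α) * μ + μ := fun k =>
    (abs_sub _ _).trans <| add_le_add (hnoise k) <| by
      rw [abs_mul, abs_of_pos hμ]; exact mul_le_of_le_one_right hμ.le (Real.abs_sign_le_one_s10 _)
  have hd : (fun k : S => βh k - β₀ k) = ChSSinv *ᵥ e := by
    ext i
    rw [hβhS' i, hβhS i]
    refine Finset.sum_congr rfl fun k _ => congrArg _ ?_
    have hXβ₀ : ∀ r, ((Xh - X) *ᵥ β₀) r = ∑ l ∈ S, (Xh r l - X r l) * β₀ l := fun r =>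
      dotProduct_eq_sum_of_support _ _ hβ₀
    simp only [e, w, ← hXβ₀]
    rfl
  have hres : (1 / (n : ℝ)) * (Xhᵀ *ᵥ (y - Xh *ᵥ βh)) j =
      w j - (ChScS *ᵥ fun k : S => βh k - β₀ k) ⟨j, hj⟩ :=
    smul_transpose_mulVec_residual_apply _ X Xh hy
      (fun k hk => (hβh0 k hk).trans (hβ₀ k hk).symm) hChScS ⟨j, hj⟩
  rw [hres, hd, mulVec_mulVec]
  exact abs_sub_dotProduct_le_of_irrepresentable hμ.le hα1 (hnoise j) (hirr _) he

/-- KKT dual-feasibility step in the proof of Theorem 3: in the setting of the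
sign-consistency step, assuming additionally the perturbed irrepresentability bound
`‖Ĉ_{SᶜS}(Ĉ_SS)⁻¹‖_∞ ≤ 1 − α/2`, the vector `β̂` with `β̂_{Sᶜ} = 0` and `β̂_S` given by the
closed-form expression satisfies `‖n⁻¹X̂_{Sᶜ}ᵀ(y − X̂β̂)‖_∞ ≤ μ`. -/
theorem stmt10 (n p : ℕ) (hn : 0 < n)
    (X Xh : Matrix (Fin n) (Fin p) ℝ) (η : Fin n → ℝ) (β₀ : Fin p → ℝ)
    (μ φ α : ℝ) (hμ : 0 < μ) (hφ : 0 ≤ φ) (hα0 : 0 < α) (hα1 : α ≤ 1)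
    (S : Finset (Fin p)) (hS : ∀ j, j ∈ S ↔ β₀ j ≠ 0)
    (ChSS : Matrix {i // i ∈ S} {i // i ∈ S} ℝ)
    (hChSS : ∀ i j, ChSS i j = (1 / (n : ℝ)) * ∑ r, Xh r i.1 * Xh r j.1)
    (ChSSinv : Matrix {i // i ∈ S} {i // i ∈ S} ℝ)
    (hinv₁ : ChSSinv * ChSS = 1) (hinv₂ : ChSS * ChSSinv = 1)
    (hCinv : ∀ i, ∑ j, |ChSSinv i j| ≤ ((4 - α) / (2 * (2 - α))) * φ)
    (hnoise : ∀ j : Fin p,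
      |(1 / (n : ℝ)) * (Xhᵀ.mulVec η) j -
        (1 / (n : ℝ)) * (Xhᵀ.mulVec ((Xh - X).mulVec β₀)) j| ≤ (α / (4 - α)) * μ)
    (βhS : {i // i ∈ S} → ℝ)
    (hβhS : ∀ i : {i // i ∈ S}, βhS i - β₀ i.1 =
      ∑ j : {i // i ∈ S}, ChSSinv i j *
        ((1 / (n : ℝ)) * (∑ r, Xh r j.1 * η r) -
          (1 / (n : ℝ)) * (∑ r, Xh r j.1 * ∑ k ∈ S, (Xh r k - X r k) * β₀ k) -
          μ * Real.sign (β₀ j.1)))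
    (ChScS : Matrix {i // i ∉ S} {i // i ∈ S} ℝ)
    (hChScS : ∀ (i : {i // i ∉ S}) (j : {i // i ∈ S}),
      ChScS i j = (1 / (n : ℝ)) * ∑ r, Xh r i.1 * Xh r j.1)
    (hirr : ∀ i, ∑ j, |(ChScS * ChSSinv) i j| ≤ 1 - α / 2)
    (y : Fin n → ℝ) (hy : y = X.mulVec β₀ + η)
    (βh : Fin p → ℝ) (hβh0 : ∀ j ∉ S, βh j = 0)
    (hβhS' : ∀ i : {i // i ∈ S}, βh i.1 = βhS i) :
    ∀ j ∉ S, |(1 / (n : ℝ)) * (Xhᵀ.mulVec (y - Xh.mulVec βh)) j| ≤ μ :=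
  stmt10_general n p X Xh η β₀ μ α hμ hα1 S hS ChSSinv hnoise βhS hβhS ChScS hChScS hirr y hy βh
    hβh0 hβhS'
end

section
/- For a > 2 and λ > 0, the SCAD thresholding operator S_SCAD(t; λ), defined by sgn(t)(|t|−λ)₊ for |t| ≤ 2λ, sgn(t)·(|t| − aλ/(a−1))/(1 − 1/(a−1)) for 2λ < |t| ≤ aλ, and t for |t| > aλ, is a global minimizer over θ ∈ ℝ of (1/2)(θ − t)² + p_λ(|θ|), where p_λ is the SCAD penalty p_λ(u) = λ∫₀ᵘ {1_{θ≤λ} + ((aλ−θ)₊/((a−1)λ))1_{θ>λ}} dθ. -/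
/-!
Write `w` for `scadWeight`, so that `p_λ(u) = λ ∫₀ᵘ w` and, for `u ≥ 0`, the objective
`θ ↦ (θ - u)²/2 + p_λ(θ)` on `[0, ∞)` has derivative `h(x) = x - u + λ w(x)`. As `w` is Lipschitz
with constant `1/((a-1)λ)` and `a ≥ 2`, `h` is nondecreasing: the objective is convex although the
penalty is not. The threshold `S` is a zero of `h`, or `S = 0` with `h(0) = λ - u ≥ 0` when
`u ≤ λ`, so `objective(θ) - objective(S) = ∫ₛ^θ h ≥ 0`. The case of a general `t` reduces to
`u = |t|` and `|θ|`, because `(|θ| - |t|)² ≤ (θ - t)²`.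
-/

open intervalIntegral
open MeasureTheory (volume)

noncomputable def scadWeight (a lam x : ℝ) : ℝ :=
  min 1 (max (a * lam - x) 0 / ((a - 1) * lam))

noncomputable def scadPenalty (a lam u : ℝ) : ℝ :=
  lam * ∫ x in (0:ℝ)..u, scadWeight a lam x

noncomputable def scadThreshold (a lam u : ℝ) : ℝ :=
  if u ≤ 2 * lam then max (u - lam) 0
  else if u ≤ a * lam then (u - a * lam / (a - 1)) / (1 - 1 / (a - 1))
  else u

section

variable {a lam : ℝ}

lemma integrand_eq_scadWeight (ha : 1 < a) (hlam : 0 < lam) (x : ℝ) :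
    ((if x ≤ lam then 1 else 0) + max (a * lam - x) 0 / ((a - 1) * lam) * (if lam < x then 1 else 0))
      = scadWeight a lam x := by
  have hc : 0 < (a - 1) * lam := by nlinarith
  unfold scadWeight
  split_ifs with h h'
  · exact absurd h' (not_lt.2 h)
  · rw [min_eq_left ((one_le_div hc).2 (le_max_of_le_left (by nlinarith)))]; ring
  · rw [min_eq_right ((div_le_one hc).2 (max_le (by nlinarith) hc.le))]; ring
  · exact absurd (not_le.1 h) ‹_›

lemma antitone_scadWeight (ha : 1 ≤ a) (hlam : 0 ≤ lam) : Antitone (scadWeight a lam) := by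
  intro x y hxy
  exact min_le_min_left _ (div_le_div_of_nonneg_right (max_le_max_right _ (by linarith))
    (mul_nonneg (by linarith) hlam))

lemma scadWeight_of_le (ha : 1 < a) (hlam : 0 < lam) {x : ℝ} (hx : x ≤ lam) :
    scadWeight a lam x = 1 := by
  have hc : 0 < (a - 1) * lam := by nlinarith
  exact min_eq_left ((one_le_div hc).2 (le_max_of_le_left (by linarith)))

lemma scadWeight_of_mem (ha : 1 < a) (hlam : 0 < lam) {x : ℝ} (hx : lam ≤ x) (hx' : x ≤ a * lam) :
    scadWeight a lam x = (a * lam - x) / ((a - 1) * lam) := by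
  have hc : 0 < (a - 1) * lam := by nlinarith
  rw [scadWeight, max_eq_left (by linarith)]
  exact min_eq_right ((div_le_one hc).2 (by linarith))

lemma scadWeight_of_ge {x : ℝ} (hx : a * lam ≤ x) : scadWeight a lam x = 0 := by
  simp [scadWeight, max_eq_right (sub_nonpos.2 hx)]

lemma abs_scadWeight_sub_le (ha : 1 < a) (hlam : 0 < lam) (x y : ℝ) :
    |scadWeight a lam x - scadWeight a lam y| ≤ |x - y| / ((a - 1) * lam) := by
  have hc : 0 < (a - 1) * lam := by nlinarith
  calc |scadWeight a lam x - scadWeight a lam y|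
      ≤ max |1 - 1| |max (a * lam - x) 0 / ((a - 1) * lam) - max (a * lam - y) 0 / ((a - 1) * lam)| :=
        abs_min_sub_min_le_max (1 : ℝ) _ 1 _
    _ = |max (a * lam - x) 0 - max (a * lam - y) 0| / ((a - 1) * lam) := by
        rw [sub_self, abs_zero, max_eq_right (abs_nonneg _), ← sub_div, abs_div, abs_of_pos hc]
    _ ≤ |x - y| / ((a - 1) * lam) := by
        refine div_le_div_of_nonneg_right ((abs_max_sub_max_le_abs _ _ 0).trans_eq ?_) hc.le
        rw [abs_sub_comm]; ring_nf

lemma monotone_add_mul_scadWeight (ha : 2 ≤ a) (hlam : 0 < lam) :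
    Monotone fun x => x + lam * scadWeight a lam x := by
  intro x y hxy
  have hlip := abs_scadWeight_sub_le (by linarith : 1 < a) hlam x y
  rw [abs_sub_comm x y, abs_of_nonneg (sub_nonneg.2 hxy), le_div_iff₀ (by nlinarith)] at hlip
  have : lam * (scadWeight a lam x - scadWeight a lam y) ≤ y - x :=
    calc lam * (scadWeight a lam x - scadWeight a lam y)
        ≤ (a - 1) * lam * |scadWeight a lam x - scadWeight a lam y| :=
          (mul_le_mul_of_nonneg_left (le_abs_self _) hlam.le).trans
            (mul_le_mul_of_nonneg_right (by nlinarith) (abs_nonneg _))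
      _ ≤ y - x := by rw [mul_comm]; exact hlip
  dsimp only
  linarith

lemma scad_middle_branch_eq (ha : 2 < a) (u : ℝ) :
    (u - a * lam / (a - 1)) / (1 - 1 / (a - 1)) = ((a - 1) * u - a * lam) / (a - 2) := by
  have h₁ : a - 1 ≠ 0 := by linarith
  have h₂ : a - 2 ≠ 0 := by linarith
  have h : 1 - 1 / (a - 1) = (a - 2) / (a - 1) := by field_simp; ring
  rw [h]
  field_simp

lemma scadThreshold_of_le (hlam : 0 ≤ lam) {u : ℝ} (hu : u ≤ lam) : scadThreshold a lam u = 0 := by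
  rw [scadThreshold, if_pos (by linarith), max_eq_right (by linarith)]

lemma scadThreshold_nonneg (ha : 2 < a) {u : ℝ} (hu : 0 ≤ u) : 0 ≤ scadThreshold a lam u := by
  unfold scadThreshold
  split_ifs with h₁ h₂
  · exact le_max_right _ _
  · rw [scad_middle_branch_eq ha]
    exact div_nonneg (by nlinarith) (by linarith)
  · exact hu

lemma scadThreshold_stationary (ha : 2 < a) (hlam : 0 < lam) {u : ℝ} (hu : lam < u) :
    scadThreshold a lam u - u + lam * scadWeight a lam (scadThreshold a lam u) = 0 := by
  unfold scadThreshold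
  split_ifs with h₁ h₂
  · rw [max_eq_left (by linarith), scadWeight_of_le (by linarith) hlam (by linarith)]; ring
  · rw [scad_middle_branch_eq ha]
    have ha₂ : 0 < a - 2 := by linarith
    have hS : lam ≤ ((a - 1) * u - a * lam) / (a - 2) := by
      rw [le_div_iff₀ ha₂]; nlinarith
    have hS' : ((a - 1) * u - a * lam) / (a - 2) ≤ a * lam := by
      rw [div_le_iff₀ ha₂]; nlinarith
    have ha₁ : a - 1 ≠ 0 := by linarith
    rw [scadWeight_of_mem (by linarith) hlam hS hS']
    field_simp
    ring
  · rw [scadWeight_of_ge (by linarith)]; ring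

end

lemma objective_sub_eq_integral {f : ℝ → ℝ} (hf : ∀ u v, IntervalIntegrable f volume u v)
    (c t s θ : ℝ) :
    ((1 / 2) * (θ - t) ^ 2 + c * ∫ x in (0:ℝ)..θ, f x)
      - ((1 / 2) * (s - t) ^ 2 + c * ∫ x in (0:ℝ)..s, f x)
      = ∫ x in s..θ, (x - t + c * f x) := by
  rw [integral_add ((intervalIntegrable_id).sub intervalIntegrable_const) ((hf s θ).const_mul c),
    integral_sub intervalIntegrable_id intervalIntegrable_const, integral_id, integral_const,
    integral_const_mul, ← integral_interval_sub_left (hf 0 θ) (hf 0 s), smul_eq_mul]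
  ring

lemma integral_nonneg_of_monotone {h : ℝ → ℝ} (hmono : Monotone h) {s θ : ℝ} (hs : 0 ≤ h s)
    (hs' : θ < s → h s ≤ 0) : 0 ≤ ∫ x in s..θ, h x := by
  rcases le_or_gt s θ with hsθ | hθs
  · exact integral_nonneg hsθ fun x hx => hs.trans (hmono hx.1)
  · rw [integral_symm, ← integral_neg]
    exact integral_nonneg hθs.le fun x hx => neg_nonneg.2 ((hmono hx.2).trans (hs' hθs))

lemma scadObjective_scadThreshold_le {a lam : ℝ} (ha : 2 < a) (hlam : 0 < lam) {u θ : ℝ}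
    (hθ : 0 ≤ θ) :
    (1 / 2) * (scadThreshold a lam u - u) ^ 2 + scadPenalty a lam (scadThreshold a lam u)
      ≤ (1 / 2) * (θ - u) ^ 2 + scadPenalty a lam θ := by
  have hw : ∀ v w, IntervalIntegrable (scadWeight a lam) volume v w :=
    fun _ _ => (antitone_scadWeight (by linarith) hlam.le).intervalIntegrable
  have hmono : Monotone fun x => x - u + lam * scadWeight a lam x := fun x y hxy => by
    have := monotone_add_mul_scadWeight ha.le hlam hxy
    dsimp only at this ⊢
    linarith
  rw [← sub_nonneg, scadPenalty, scadPenalty, objective_sub_eq_integral hw]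
  rcases le_or_gt u lam with hul | hlu
  · rw [scadThreshold_of_le hlam.le hul]
    refine integral_nonneg_of_monotone hmono ?_ (fun h => absurd hθ (not_le.2 h))
    rw [scadWeight_of_le (by linarith) hlam hlam.le]
    linarith
  · have hstat := scadThreshold_stationary ha hlam hlu
    exact integral_nonneg_of_monotone hmono hstat.ge fun _ => hstat.le

lemma sign_mul_abs_self (t : ℝ) : Real.sign t * |t| = t := by
  rcases lt_trichotomy t 0 with ht | ht | ht
  · rw [Real.sign_of_neg ht, abs_of_neg ht]; ring
  · rw [ht, Real.sign_zero, zero_mul]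
  · rw [Real.sign_of_pos ht, abs_of_pos ht]; ring

lemma abs_sign_mul {t s : ℝ} (hs : 0 ≤ s) (h₀ : t = 0 → s = 0) : |Real.sign t * s| = s := by
  rcases lt_trichotomy t 0 with ht | ht | ht
  · rw [Real.sign_of_neg ht, neg_one_mul, abs_neg, abs_of_nonneg hs]
  · rw [ht, Real.sign_zero, zero_mul, abs_zero, h₀ ht]
  · rw [Real.sign_of_pos ht, one_mul, abs_of_nonneg hs]

lemma sign_mul_sub_sq {t s : ℝ} (h₀ : t = 0 → s = 0) :
    (Real.sign t * s - t) ^ 2 = (s - |t|) ^ 2 := by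
  rcases lt_trichotomy t 0 with ht | ht | ht
  · rw [Real.sign_of_neg ht, abs_of_neg ht]; ring
  · simp [ht, h₀ ht]
  · rw [Real.sign_of_pos ht, abs_of_pos ht]; ring

/-- The SCAD thresholding operator is a global minimizer of the univariate SCAD-penalized
least squares objective `(1/2)(θ − t)² + p_λ(|θ|)`, where `p_λ` is the SCAD penalty of
Fan & Li with parameters `λ > 0` and `a > 2`. -/
theorem stmt12 (a lam t : ℝ) (ha : 2 < a) (hlam : 0 < lam) :
    let p : ℝ → ℝ := fun u =>
      lam * ∫ θ in (0:ℝ)..u,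
        ((if θ ≤ lam then 1 else 0) + (max (a * lam - θ) 0 / ((a - 1) * lam)) * (if lam < θ then 1 else 0))
    let Sscad : ℝ :=
      if |t| ≤ 2 * lam then Real.sign t * max (|t| - lam) 0
      else if |t| ≤ a * lam then Real.sign t * ((|t| - a * lam / (a - 1)) / (1 - 1 / (a - 1)))
      else t
    ∀ θ : ℝ, (1 / 2) * (Sscad - t) ^ 2 + p |Sscad| ≤ (1 / 2) * (θ - t) ^ 2 + p |θ| := by
  intro p Sscad θ
  have hp : p = scadPenalty a lam :=
    funext fun u => by simp only [p, scadPenalty, integrand_eq_scadWeight (by linarith : 1 < a) hlam]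
  have hS : Sscad = Real.sign t * scadThreshold a lam |t| := by
    simp only [Sscad, scadThreshold]
    split_ifs
    · rfl
    · rfl
    · exact (sign_mul_abs_self t).symm
  have h₀ : t = 0 → scadThreshold a lam |t| = 0 := fun ht =>
    scadThreshold_of_le hlam.le (by rw [ht, abs_zero]; exact hlam.le)
  have hsq : (|θ| - |t|) ^ 2 ≤ (θ - t) ^ 2 := sq_le_sq.2 (by simpa using abs_abs_sub_abs_le_abs_sub θ t)
  rw [hp, hS, sign_mul_sub_sq h₀, abs_sign_mul (scadThreshold_nonneg ha (abs_nonneg t)) h₀]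
  have hmin := scadObjective_scadThreshold_le ha hlam (u := |t|) (abs_nonneg θ)
  linarith
end

section
/- For a > 1 and λ > 0, the MCP thresholding operator S_MCP(t; λ), defined by sgn(t)(|t|−λ)₊/(1 − 1/a) for |t| ≤ aλ and t for |t| > aλ, is a global minimizer over θ ∈ ℝ of (1/2)(θ − t)² + p_λ(|θ|), where p_λ(u) = ∫₀ᵘ ((aλ − θ)₊/a) dθ is the minimax concave penalty. -/
/-!
With `c = aλ`, the penalty integrates to `p(u) = λm - m²/(2a)` where `m = min u c`: it follows the
concave quadratic `λu - u²/(2a)` up to `c`, stays at its maximum `aλ²/2` afterwards, and so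
dominates that quadratic everywhere. Since the threshold has the sign of `t` and
`(|θ| - |t|)² ≤ (θ - t)²`, it suffices to minimize `½(θ - τ)² + p(θ)` over `θ ≥ 0` for `τ = |t|`.
If `τ ≤ c`, the objective is bounded below by the quadratic `½(θ - τ)² + λθ - θ²/(2a)`, convex
because `a > 1`, and the threshold is the minimizer of that quadratic on `[0, ∞)`; it lies in
`[0, c]`, where the two agree. If `τ > c`, the threshold `τ` attains the value `aλ²/2`, below
which the objective never goes.
-/

open intervalIntegral

theorem integral_max_sub_zero {c : ℝ} (hc : 0 ≤ c) (u : ℝ) :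
    ∫ θ in (0:ℝ)..u, max (c - θ) 0 = c * min u c - min u c ^ 2 / 2 := by
  have below : ∀ v ≤ c, ∫ θ in (0:ℝ)..v, max (c - θ) 0 = c * v - v ^ 2 / 2 := by
    intro v hv
    have hmax : Set.EqOn (fun θ => max (c - θ) 0) (fun θ => c - θ) (Set.uIcc 0 v) :=
      fun θ hθ => max_eq_left (sub_nonneg.2 (hθ.2.trans (max_le hc hv)))
    rw [integral_congr hmax, integral_sub intervalIntegrable_const intervalIntegrable_id,
      integral_const, integral_id, smul_eq_mul]
    ring
  rcases le_total u c with hu | hu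
  · rw [min_eq_left hu, below u hu]
  · have above : ∫ θ in c..u, max (c - θ) 0 = 0 := by
      have hmax : Set.EqOn (fun θ => max (c - θ) 0) (fun _ => (0:ℝ)) (Set.uIcc c u) := by
        intro θ hθ
        rw [Set.uIcc_of_le hu] at hθ
        exact max_eq_right (sub_nonpos.2 hθ.1)
      rw [integral_congr hmax, integral_zero]
    have hint : Continuous fun θ : ℝ => max (c - θ) 0 := by fun_prop
    rw [min_eq_right hu, ← integral_add_adjacent_intervals (hint.intervalIntegrable 0 c)
      (hint.intervalIntegrable c u), above, add_zero, below c le_rfl]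

theorem isMinOn_quadratic_Ici {κ : ℝ} (hκ : 0 < κ) (b : ℝ) :
    IsMinOn (fun r => κ / 2 * r ^ 2 - b * r) (Set.Ici 0) (max b 0 / κ) := by
  intro r (hr : 0 ≤ r)
  show κ / 2 * (max b 0 / κ) ^ 2 - b * (max b 0 / κ) ≤ κ / 2 * r ^ 2 - b * r
  rcases le_total b 0 with hb | hb
  · rw [max_eq_right hb, zero_div]
    nlinarith [mul_nonneg hκ.le (sq_nonneg r), mul_nonneg (neg_nonneg.2 hb) hr]
  · rw [max_eq_left hb]
    have : κ / 2 * r ^ 2 - b * r - (κ / 2 * (b / κ) ^ 2 - b * (b / κ))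
        = κ / 2 * (r - b / κ) ^ 2 := by
      field_simp
      ring
    nlinarith [sq_nonneg (r - b / κ)]

noncomputable def mcpPenalty (a lam u : ℝ) : ℝ :=
  lam * min u (a * lam) - min u (a * lam) ^ 2 / (2 * a)

noncomputable def mcpThreshold (a lam τ : ℝ) : ℝ :=
  if τ ≤ a * lam then max (τ - lam) 0 / (1 - 1 / a) else τ

noncomputable def mcpObjective (a lam t θ : ℝ) : ℝ :=
  1 / 2 * (θ - t) ^ 2 + mcpPenalty a lam |θ|

section

variable {a lam : ℝ}

theorem integral_div_eq_mcpPenalty (ha : 0 < a) (hlam : 0 ≤ lam) (u : ℝ) :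
    ∫ θ in (0:ℝ)..u, max (a * lam - θ) 0 / a = mcpPenalty a lam u := by
  rw [integral_div, integral_max_sub_zero (by positivity), mcpPenalty]
  field_simp

theorem mcpPenalty_of_le {u : ℝ} (h : u ≤ a * lam) :
    mcpPenalty a lam u = lam * u - u ^ 2 / (2 * a) := by
  rw [mcpPenalty, min_eq_left h]

theorem mcpPenalty_of_ge (ha : a ≠ 0) {u : ℝ} (h : a * lam ≤ u) :
    mcpPenalty a lam u = a * lam ^ 2 / 2 := by
  rw [mcpPenalty, min_eq_right h]
  field_simp
  ring

theorem le_mcpPenalty (ha : 0 < a) (u : ℝ) : lam * u - u ^ 2 / (2 * a) ≤ mcpPenalty a lam u := by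
  rcases le_total u (a * lam) with h | h
  · rw [mcpPenalty_of_le h]
  · rw [mcpPenalty_of_ge ha.ne' h]
    have : a * lam ^ 2 / 2 - (lam * u - u ^ 2 / (2 * a)) = (u - a * lam) ^ 2 / (2 * a) := by
      field_simp
      ring
    have : 0 ≤ (u - a * lam) ^ 2 / (2 * a) := by positivity
    linarith

theorem one_sub_one_div_pos (ha : 1 < a) : 0 < 1 - 1 / a := by
  rw [sub_pos, div_lt_one (by linarith)]
  exact ha

theorem mcpThreshold_nonneg (ha : 1 < a) (hlam : 0 ≤ lam) (τ : ℝ) : 0 ≤ mcpThreshold a lam τ := by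
  unfold mcpThreshold
  split_ifs with h
  · exact div_nonneg (le_max_right _ _) (one_sub_one_div_pos ha).le
  · have : 0 ≤ a * lam := mul_nonneg (by linarith) hlam
    linarith

theorem mcpThreshold_le (ha : 1 < a) (hlam : 0 ≤ lam) {τ : ℝ} (hτ : τ ≤ a * lam) :
    mcpThreshold a lam τ ≤ a * lam := by
  rw [mcpThreshold, if_pos hτ, div_le_iff₀ (one_sub_one_div_pos ha)]
  refine max_le ?_ (mul_nonneg (mul_nonneg (by linarith) hlam) (one_sub_one_div_pos ha).le)
  have : a * lam * (1 - 1 / a) = a * lam - lam := by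
    field_simp
  linarith

theorem mcpThreshold_zero (hlam : 0 ≤ lam) : mcpThreshold a lam 0 = 0 := by
  simp [mcpThreshold, hlam]

theorem mcpObjective_mcpThreshold_le_of_le (ha : 1 < a) (hlam : 0 ≤ lam) {τ r : ℝ}
    (hτ : τ ≤ a * lam) (hr : 0 ≤ r) :
    mcpObjective a lam τ (mcpThreshold a lam τ) ≤ mcpObjective a lam τ r := by
  rw [mcpObjective, mcpObjective, abs_of_nonneg hr,
    abs_of_nonneg (mcpThreshold_nonneg ha hlam τ), mcpPenalty_of_le (mcpThreshold_le ha hlam hτ)]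
  set s := mcpThreshold a lam τ with hs
  have hmin : (1 - 1 / a) / 2 * s ^ 2 - (τ - lam) * s
      ≤ (1 - 1 / a) / 2 * r ^ 2 - (τ - lam) * r := by
    rw [hs, mcpThreshold, if_pos hτ]
    exact isMinOn_quadratic_Ici (one_sub_one_div_pos ha) (τ - lam) (Set.mem_Ici.2 hr)
  have hpen := le_mcpPenalty (lam := lam) (by linarith : 0 < a) r
  have expand : ∀ x : ℝ, 1 / 2 * (x - τ) ^ 2 + (lam * x - x ^ 2 / (2 * a))
      = (1 - 1 / a) / 2 * x ^ 2 - (τ - lam) * x + τ ^ 2 / 2 := fun x => by ring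
  linarith [expand s, expand r]

theorem mcpObjective_mcpThreshold_le_of_gt (ha : 1 < a) {τ r : ℝ} (hτ : a * lam < τ)
    (hr : 0 ≤ r) :
    mcpObjective a lam τ (mcpThreshold a lam τ) ≤ mcpObjective a lam τ r := by
  have ha0 : 0 < a := by linarith
  rw [mcpObjective, mcpObjective, abs_of_nonneg hr, mcpThreshold, if_neg hτ.not_ge, sub_self,
    mcpPenalty_of_ge ha0.ne' (hτ.le.trans (le_abs_self τ))]
  rcases le_total (a * lam) r with har | har
  · rw [mcpPenalty_of_ge ha0.ne' har]
    nlinarith [sq_nonneg (r - τ)]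
  · rw [mcpPenalty_of_le har]
    have hgap : a * lam ^ 2 / 2 = 1 / 2 * (r - a * lam) ^ 2 + (lam * r - r ^ 2 / (2 * a))
        - (a - 1) / (2 * a) * (r - a * lam) ^ 2 := by
      field_simp
      ring
    have : 0 ≤ (a - 1) / (2 * a) * (r - a * lam) ^ 2 :=
      mul_nonneg (div_nonneg (by linarith) (by positivity)) (sq_nonneg _)
    nlinarith [mul_nonneg (sub_nonneg.2 har) (sub_nonneg.2 (by linarith : r ≤ τ))]

theorem isMinOn_mcpObjective_mcpThreshold (ha : 1 < a) (hlam : 0 ≤ lam) (τ : ℝ) :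
    IsMinOn (mcpObjective a lam τ) (Set.Ici 0) (mcpThreshold a lam τ) := by
  intro r (hr : 0 ≤ r)
  rcases le_or_gt τ (a * lam) with hτ | hτ
  · exact mcpObjective_mcpThreshold_le_of_le ha hlam hτ hr
  · exact mcpObjective_mcpThreshold_le_of_gt ha hτ hr

theorem mcpObjective_abs_le (t θ : ℝ) : mcpObjective a lam |t| |θ| ≤ mcpObjective a lam t θ := by
  have h : (|θ| - |t|) ^ 2 ≤ (θ - t) ^ 2 := by
    simpa only [sq_abs] using pow_le_pow_left₀ (abs_nonneg _) (abs_abs_sub_abs_le_abs_sub θ t) 2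
  rw [mcpObjective, mcpObjective, abs_abs]
  linarith

theorem mcpObjective_sign_mul {t : ℝ} (ht : t ≠ 0) (x : ℝ) :
    mcpObjective a lam t (Real.sign t * x) = mcpObjective a lam |t| x := by
  rcases ht.lt_or_gt with h | h
  · simp only [mcpObjective, Real.sign_of_neg h, abs_of_neg h, neg_one_mul, abs_neg]
    ring
  · simp [mcpObjective, Real.sign_of_pos h, abs_of_pos h]

theorem ite_eq_sign_mul_mcpThreshold (t : ℝ) :
    (if |t| ≤ a * lam then Real.sign t * (max (|t| - lam) 0 / (1 - 1 / a)) else t)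
      = Real.sign t * mcpThreshold a lam |t| := by
  rw [mcpThreshold]
  split_ifs
  · rfl
  · rcases lt_trichotomy t 0 with h | rfl | h
    · simp [Real.sign_of_neg h, abs_of_neg h]
    · simp
    · simp [Real.sign_of_pos h, abs_of_pos h]

end

/-- The MCP thresholding operator is a global minimizer of the univariate MCP-penalized
least squares objective `(1/2)(θ − t)² + p_λ(|θ|)`, where `p_λ` is the minimax concave
penalty of Zhang with parameters `λ > 0` and `a > 1`. -/
theorem stmt13 (a lam t : ℝ) (ha : 1 < a) (hlam : 0 < lam) :
    let p : ℝ → ℝ := fun u => ∫ θ in (0:ℝ)..u, max (a * lam - θ) 0 / a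
    let Smcp : ℝ :=
      if |t| ≤ a * lam then Real.sign t * (max (|t| - lam) 0 / (1 - 1 / a))
      else t
    ∀ θ : ℝ, (1 / 2) * (Smcp - t) ^ 2 + p |Smcp| ≤ (1 / 2) * (θ - t) ^ 2 + p |θ| := by
  intro p Smcp θ
  have hp : ∀ u, p u = mcpPenalty a lam u := integral_div_eq_mcpPenalty (by linarith) hlam.le
  have hS : Smcp = Real.sign t * mcpThreshold a lam |t| := ite_eq_sign_mul_mcpThreshold t
  rw [hp, hp]
  change mcpObjective a lam t Smcp ≤ mcpObjective a lam t θ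
  calc mcpObjective a lam t Smcp = mcpObjective a lam |t| (mcpThreshold a lam |t|) := by
        rcases eq_or_ne t 0 with rfl | ht
        · simp [hS, mcpThreshold_zero hlam.le]
        · rw [hS, mcpObjective_sign_mul ht]
    _ ≤ mcpObjective a lam |t| |θ| :=
        isMinOn_mcpObjective_mcpThreshold ha hlam.le |t| (Set.mem_Ici.2 (abs_nonneg θ))
    _ ≤ mcpObjective a lam t θ := mcpObjective_abs_le t θ
end
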